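/- Let T > 0 and let σ : [0,T] → ℝ be continuous and nonnegative. For each integer B ≥ 1, with Δ_B = T/B and 𝖳_i = i·T/B, one has B^{1/2} · Σ_{i=1}^B ( Δ_B · ∫_{𝖳_{i−1}}^{𝖳_i} σ(u)⁴ du )^{3/4} → T^{1/2} · ∫₀^T σ(u)³ du as B → ∞. -/

import Mathlib

open MeasureTheory Filter

lemma rpow34_pow4 {c : ℝ} (hc : 0 ≤ c) : (c ^ 4) ^ ((3:ℝ)/4) = c ^ 3 := by
  rw [← Real.rpow_natCast c 4, ← Real.rpow_mul hc, ← Real.rpow_natCast c 3]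
  norm_num

lemma cube_bound {L U M e : ℝ} (hL : 0 ≤ L) (hLU : L ≤ U) (hUM : U ≤ M + 1)
    (hM : 0 ≤ M) (hd : U - L ≤ 2*e) (he : 0 ≤ e) : U^3 - L^3 ≤ 6*(M+1)^2*e := by
  have h3 : U^2 + U*L + L^2 ≤ 3*(M+1)^2 := by nlinarith
  have h4 : 0 ≤ U^2 + U*L + L^2 := by nlinarith
  nlinarith [mul_le_mul hd h3 h4 (by linarith : (0:ℝ) ≤ 2*e)]

lemma key_eq {T : ℝ} (hT : 0 < T) {B : ℕ} (hB : 0 < (B:ℝ)) {L : ℝ} (hL : 0 ≤ L) :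
    (B:ℝ) ^ ((1:ℝ)/2) * ((T/B) * ((T/B) * L^4)) ^ ((3:ℝ)/4)
      = T ^ ((1:ℝ)/2) * (T/B) * L^3 := by
  have hx : (0:ℝ) < T/B := div_pos hT hB
  set s := (T/(B:ℝ)) ^ ((1:ℝ)/2) with hs
  have hs0 : 0 ≤ s := Real.rpow_nonneg hx.le _
  have hs2 : s^2 = T/B := by
    rw [hs, ← Real.rpow_natCast _ 2, ← Real.rpow_mul hx.le]; norm_num
  have hc4 : (s*L)^4 = (T/B) * ((T/B) * L^4) := by
    have hs4 : s^4 = (T/B)^2 := by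
      rw [show (4:ℕ) = 2*2 from rfl, pow_mul, hs2]
    calc (s*L)^4 = s^4 * L^4 := by ring
      _ = (T/B) * ((T/B) * L^4) := by rw [hs4]; ring
  rw [← hc4, rpow34_pow4 (mul_nonneg hs0 hL)]
  have hBs : (B:ℝ) ^ ((1:ℝ)/2) * s = T ^ ((1:ℝ)/2) := by
    rw [hs, ← Real.mul_rpow hB.le hx.le]
    congr 1
    field_simp
  calc (B:ℝ) ^ ((1:ℝ)/2) * (s*L)^3
      = ((B:ℝ) ^ ((1:ℝ)/2) * s) * (s^2 * L^3) := by ring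
    _ = T ^ ((1:ℝ)/2) * ((T/B) * L^3) := by rw [hBs, hs2]
    _ = T ^ ((1:ℝ)/2) * (T/B) * L^3 := by ring

set_option maxHeartbeats 1000000 in
/-- Riemann-sum-type convergence:
`B^{1/2} Σᵢ (Δ_B ∫_block σ⁴)^{3/4} → T^{1/2} ∫₀^T σ³` as `B → ∞`. -/
theorem stmt12 (T : ℝ) (hT : 0 < T) (σ : ℝ → ℝ)
    (hcont : ContinuousOn σ (Set.Icc 0 T))
    (hnn : ∀ u ∈ Set.Icc (0 : ℝ) T, 0 ≤ σ u) :
    Tendsto (fun B : ℕ =>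
        (B : ℝ) ^ ((1 : ℝ) / 2) * ∑ i ∈ Finset.range B,
          ((T / B) *
            ∫ u in ((i : ℝ) * T / B)..(((i : ℝ) + 1) * T / B), σ u ^ 4) ^ ((3 : ℝ) / 4))
      atTop
      (nhds (T ^ ((1 : ℝ) / 2) * ∫ u in (0:ℝ)..T, σ u ^ 3)) := by
  rw [Metric.tendsto_atTop]
  intro ε hε
  obtain ⟨M, hM⟩ := isCompact_Icc.exists_bound_of_continuousOn hcont
  have hM0 : 0 ≤ M := le_trans (norm_nonneg _) (hM 0 ⟨le_refl 0, hT.le⟩)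
  have hTr : (0:ℝ) < T ^ ((1:ℝ)/2) := Real.rpow_pos_of_pos hT _
  set C : ℝ := 6*(M+1)^2 * (T ^ ((1:ℝ)/2) * T) with hCdef
  have hC : 0 < C := by positivity
  set ε' : ℝ := min 1 (ε/(2*C)) with hε'def
  have hε' : 0 < ε' := lt_min one_pos (div_pos hε (by positivity))
  have hε'1 : ε' ≤ 1 := min_le_left _ _
  have huc := isCompact_Icc.uniformContinuousOn_of_continuous hcont
  rw [Metric.uniformContinuousOn_iff] at huc
  obtain ⟨δ, hδ0, hδ⟩ := huc ε' hε'
  obtain ⟨N, hN⟩ := exists_nat_gt (T/δ)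
  refine ⟨max N 1, fun B hB => ?_⟩
  have hB1 : 1 ≤ B := le_trans (le_max_right N 1) hB
  have hBpos : (0:ℝ) < B := by exact_mod_cast hB1
  have hΔpos : (0:ℝ) < T / B := div_pos hT hBpos
  have hΔδ : T / B < δ := by
    have hNB : (N:ℝ) ≤ B := by exact_mod_cast le_trans (le_max_left N 1) hB
    rw [div_lt_iff₀ hBpos]
    have : T < N * δ := by
      have := (div_lt_iff₀ hδ0).mp hN
      linarith
    nlinarith
  -- per-block estimate
  have key : ∀ i ∈ Finset.range B,
      |(B:ℝ) ^ ((1:ℝ)/2) *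
          ((T / B) * ∫ u in ((i : ℝ) * T / B)..(((i : ℝ) + 1) * T / B), σ u ^ 4) ^ ((3:ℝ)/4)
        - T ^ ((1:ℝ)/2) * ∫ u in ((i : ℝ) * T / B)..(((i : ℝ) + 1) * T / B), σ u ^ 3|
        ≤ T ^ ((1:ℝ)/2) * (T/B) * (6*(M+1)^2*ε') := by
    intro i hi
    rw [Finset.mem_range] at hi
    set a : ℝ := (i:ℝ) * T / B with hadef
    set b : ℝ := ((i:ℝ) + 1) * T / B with hbdef
    have hba : b - a = T / B := by rw [hadef, hbdef]; ring
    have hab : a ≤ b := by linarith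
    have ha0 : 0 ≤ a := by positivity
    have hbT : b ≤ T := by
      rw [hbdef, div_le_iff₀ hBpos]
      have hiB : (i:ℝ) + 1 ≤ B := by exact_mod_cast hi
      nlinarith
    have hsub : Set.Icc a b ⊆ Set.Icc 0 T := Set.Icc_subset_Icc ha0 hbT
    have ha_mem : a ∈ Set.Icc (0:ℝ) T := hsub (Set.left_mem_Icc.mpr hab)
    set L : ℝ := max (σ a - ε') 0 with hLdef
    set U : ℝ := σ a + ε' with hUdef
    have hLnn : 0 ≤ L := le_max_right _ _
    have hUnn : 0 ≤ U := add_nonneg (hnn a ha_mem) hε'.le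
    have hLU : ∀ u ∈ Set.Icc a b, L ≤ σ u ∧ σ u ≤ U := by
      intro u hu
      have humem := hsub hu
      have hd : dist u a < δ := by
        rw [Real.dist_eq]
        have h1 : |u - a| ≤ T / B := by
          rw [abs_le]
          refine ⟨by linarith [hu.1, hΔpos.le], by linarith [hu.2, hba]⟩
        linarith
      have := hδ u humem a ha_mem hd
      rw [Real.dist_eq, abs_lt] at this
      constructor
      · exact max_le (by linarith [this.2]) (hnn u humem)
      · rw [hUdef]; linarith [this.1]
    have hLle : ∀ u ∈ Set.Icc a b, L ≤ σ u := fun u hu => (hLU u hu).1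
    have hUle : ∀ u ∈ Set.Icc a b, σ u ≤ U := fun u hu => (hLU u hu).2
    have hσnn : ∀ u ∈ Set.Icc a b, 0 ≤ σ u := fun u hu => hnn u (hsub hu)
    have hc4 : ContinuousOn (fun u => σ u ^ 4) (Set.Icc a b) := (hcont.mono hsub).pow 4
    have hc3 : ContinuousOn (fun u => σ u ^ 3) (Set.Icc a b) := (hcont.mono hsub).pow 3
    have huIcc : Set.uIcc a b = Set.Icc a b := Set.uIcc_of_le hab
    have hint4 : IntervalIntegrable (fun u => σ u ^ 4) volume a b :=
      (huIcc ▸ hc4).intervalIntegrable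
    have hint3 : IntervalIntegrable (fun u => σ u ^ 3) volume a b :=
      (huIcc ▸ hc3).intervalIntegrable
    set J : ℝ := ∫ u in a..b, σ u ^ 4 with hJdef
    set I : ℝ := ∫ u in a..b, σ u ^ 3 with hIdef
    have hconst : ∀ (c : ℝ), (∫ _ in a..b, c) = (T/B) * c := by
      intro c
      rw [intervalIntegral.integral_const, smul_eq_mul, hba]
    have hJlo : (T/B) * L^4 ≤ J := by
      rw [← hconst (L^4)]
      exact intervalIntegral.integral_mono_on hab intervalIntegrable_const hint4
        (fun u hu => pow_le_pow_left₀ hLnn (hLle u hu) 4)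
    have hJhi : J ≤ (T/B) * U^4 := by
      rw [← hconst (U^4)]
      exact intervalIntegral.integral_mono_on hab hint4 intervalIntegrable_const
        (fun u hu => pow_le_pow_left₀ (hσnn u hu) (hUle u hu) 4)
    have hIlo : (T/B) * L^3 ≤ I := by
      rw [← hconst (L^3)]
      exact intervalIntegral.integral_mono_on hab intervalIntegrable_const hint3
        (fun u hu => pow_le_pow_left₀ hLnn (hLle u hu) 3)
    have hIhi : I ≤ (T/B) * U^3 := by
      rw [← hconst (U^3)]
      exact intervalIntegral.integral_mono_on hab hint3 intervalIntegrable_const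
        (fun u hu => pow_le_pow_left₀ (hσnn u hu) (hUle u hu) 3)
    -- term bounds
    have hBr : (0:ℝ) ≤ (B:ℝ) ^ ((1:ℝ)/2) := Real.rpow_nonneg hBpos.le _
    have htlo : T ^ ((1:ℝ)/2) * (T/B) * L^3
        ≤ (B:ℝ) ^ ((1:ℝ)/2) * ((T/B) * J) ^ ((3:ℝ)/4) := by
      rw [← key_eq hT hBpos hLnn]
      refine mul_le_mul_of_nonneg_left ?_ hBr
      exact Real.rpow_le_rpow (by positivity)
        (mul_le_mul_of_nonneg_left hJlo hΔpos.le) (by norm_num)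
    have hthi : (B:ℝ) ^ ((1:ℝ)/2) * ((T/B) * J) ^ ((3:ℝ)/4)
        ≤ T ^ ((1:ℝ)/2) * (T/B) * U^3 := by
      rw [← key_eq hT hBpos hUnn]
      refine mul_le_mul_of_nonneg_left ?_ hBr
      refine Real.rpow_le_rpow ?_ (mul_le_mul_of_nonneg_left hJhi hΔpos.le) (by norm_num)
      have hJnn : 0 ≤ J := le_trans (by positivity) hJlo
      positivity
    -- cube bound
    have hσaM : σ a ≤ M := le_trans (le_abs_self _) (hM a ha_mem)
    have hULle : L ≤ U := max_le (by rw [hUdef]; linarith) hUnn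
    have hUM : U ≤ M + 1 := by rw [hUdef]; linarith
    have hULd : U - L ≤ 2*ε' := by
      have : σ a - ε' ≤ L := le_max_left _ _
      rw [hUdef]; linarith
    have hcube : U^3 - L^3 ≤ 6*(M+1)^2*ε' :=
      cube_bound hLnn hULle hUM hM0 hULd hε'.le
    have hcpos : (0:ℝ) ≤ T ^ ((1:ℝ)/2) * (T/B) := by positivity
    have hIlo' : T ^ ((1:ℝ)/2) * (T/B) * L^3 ≤ T ^ ((1:ℝ)/2) * I := by
      calc T ^ ((1:ℝ)/2) * (T/B) * L^3 = T ^ ((1:ℝ)/2) * ((T/B) * L^3) := by ring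
        _ ≤ T ^ ((1:ℝ)/2) * I := mul_le_mul_of_nonneg_left hIlo hTr.le
    have hIhi' : T ^ ((1:ℝ)/2) * I ≤ T ^ ((1:ℝ)/2) * (T/B) * U^3 := by
      calc T ^ ((1:ℝ)/2) * I ≤ T ^ ((1:ℝ)/2) * ((T/B) * U^3) :=
            mul_le_mul_of_nonneg_left hIhi hTr.le
        _ = T ^ ((1:ℝ)/2) * (T/B) * U^3 := by ring
    have hdd : T ^ ((1:ℝ)/2) * (T/B) * U^3 - T ^ ((1:ℝ)/2) * (T/B) * L^3
        ≤ T ^ ((1:ℝ)/2) * (T/B) * (6*(M+1)^2*ε') := by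
      calc T ^ ((1:ℝ)/2) * (T/B) * U^3 - T ^ ((1:ℝ)/2) * (T/B) * L^3
          = (T ^ ((1:ℝ)/2) * (T/B)) * (U^3 - L^3) := by ring
        _ ≤ (T ^ ((1:ℝ)/2) * (T/B)) * (6*(M+1)^2*ε') :=
            mul_le_mul_of_nonneg_left hcube hcpos
        _ = T ^ ((1:ℝ)/2) * (T/B) * (6*(M+1)^2*ε') := by ring
    rw [abs_le]
    exact ⟨by linarith, by linarith⟩
  -- sum up
  have hintk : ∀ k < B, IntervalIntegrable (fun u => σ u ^ 3) volume
      ((fun n : ℕ => (n:ℝ) * T / B) k) ((fun n : ℕ => (n:ℝ) * T / B) (k+1)) := by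
    intro k hk
    have hk0 : (0:ℝ) ≤ (k:ℝ) * T / B := by positivity
    have hkb : ((k:ℝ)+1) * T / B ≤ T := by
      rw [div_le_iff₀ hBpos]
      have : (k:ℝ) + 1 ≤ B := by exact_mod_cast hk
      nlinarith
    have hab : (k:ℝ) * T / B ≤ ((k:ℝ)+1) * T / B := by
      have : ((k:ℝ)+1) * T / B - (k:ℝ) * T / B = T / B := by ring
      linarith
    have hsub : Set.uIcc ((k:ℝ) * T / B) (((k:ℝ)+1) * T / B) ⊆ Set.Icc 0 T := by
      rw [Set.uIcc_of_le hab]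
      exact Set.Icc_subset_Icc hk0 hkb
    have : ContinuousOn (fun u => σ u ^ 3)
        (Set.uIcc ((k:ℝ) * T / B) (((k:ℝ)+1) * T / B)) := (hcont.mono hsub).pow 3
    simpa using this.intervalIntegrable
  have hsum : ∑ i ∈ Finset.range B,
      ∫ u in ((i : ℝ) * T / B)..(((i : ℝ) + 1) * T / B), σ u ^ 3
      = ∫ u in (0:ℝ)..T, σ u ^ 3 := by
    have := intervalIntegral.sum_integral_adjacent_intervals (μ := volume)
      (a := fun n : ℕ => (n:ℝ) * T / B) (f := fun u => σ u ^ 3) hintk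
    simp only [Nat.cast_zero, Nat.cast_add, Nat.cast_one, zero_mul, zero_div] at this
    have hBT : (B:ℝ) * T / B = T := by field_simp
    rw [hBT] at this
    exact this
  rw [Real.dist_eq]
  have h1 : (B : ℝ) ^ ((1 : ℝ) / 2) * (∑ i ∈ Finset.range B,
        ((T / B) * ∫ u in ((i : ℝ) * T / B)..(((i : ℝ) + 1) * T / B), σ u ^ 4) ^ ((3:ℝ)/4))
      = ∑ i ∈ Finset.range B, (B : ℝ) ^ ((1 : ℝ) / 2) *
        ((T / B) * ∫ u in ((i : ℝ) * T / B)..(((i : ℝ) + 1) * T / B), σ u ^ 4) ^ ((3:ℝ)/4) :=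
    Finset.mul_sum _ _ _
  have h2 : T ^ ((1:ℝ)/2) * ∫ u in (0:ℝ)..T, σ u ^ 3
      = ∑ i ∈ Finset.range B, T ^ ((1:ℝ)/2) *
        ∫ u in ((i : ℝ) * T / B)..(((i : ℝ) + 1) * T / B), σ u ^ 3 := by
    rw [← hsum, Finset.mul_sum]
  rw [h1, h2, ← Finset.sum_sub_distrib]
  refine lt_of_le_of_lt (Finset.abs_sum_le_sum_abs _ _) ?_
  refine lt_of_le_of_lt (Finset.sum_le_sum key) ?_
  rw [Finset.sum_const, Finset.card_range, nsmul_eq_mul]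
  have heq : (B:ℝ) * (T ^ ((1:ℝ)/2) * (T/B) * (6*(M+1)^2*ε')) = C * ε' := by
    rw [hCdef]; field_simp
  rw [heq]
  calc C * ε' ≤ C * (ε/(2*C)) := mul_le_mul_of_nonneg_left (min_le_right _ _) hC.le
    _ = ε/2 := by field_simp
    _ < ε := by linarith
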